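/- arXiv:1605.06478 — 7 statements merged into one kernel-verified Lean document; each statement's English description precedes it below -/
import Mathlib

section
/- If μ : ℕ → ℝ is a nondecreasing sequence with μ_{k+1} - μ_k nonincreasing in k, then the function V_n(c) := ∑_{k=c}^{n-1} μ_k · (c-1)/((k-1)k) + (c-1)/(n-1) · μ_1 is concave in c; more precisely V_n(c+2) - 2V_n(c+1) + V_n(c) = -(μ_{c+1} - μ_c)/c ≤ 0 for 2 ≤ c ≤ n-2. -/
/-!
Write `V c = (c - 1) T c + (c - 1) μ₁ / (n - 1)` with the tail sum
`T c = ∑_{k=c}^{n-1} μ_k / ((k - 1) k)`. The second difference kills the affine term, and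
peeling the first two terms off `T c` and `T (c + 1)` leaves
`(c - 1) · μ_c / ((c - 1) c) - (c + 1) · μ_{c+1} / (c (c + 1)) = -(μ_{c+1} - μ_c) / c`,
which is nonpositive since `μ` is nondecreasing.
-/

open Finset

lemma sum_Icc_eq_add_sum_Icc_succ {M : Type*} [AddCommMonoid M] (f : ℕ → M) {a b : ℕ}
    (h : a ≤ b) : ∑ k ∈ Icc a b, f k = f a + ∑ k ∈ Icc (a + 1) b, f k := by
  rw [Icc_add_one_left_eq_Ioc, add_sum_Ioc_eq_sum_Icc h]

lemma second_diff_mul_sum_Icc (g : ℕ → ℝ) {c m : ℕ} (h : c + 1 ≤ m) :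
    ((c : ℝ) + 1) * ∑ k ∈ Icc (c + 2) m, g k - 2 * ((c : ℝ) * ∑ k ∈ Icc (c + 1) m, g k)
        + ((c : ℝ) - 1) * ∑ k ∈ Icc c m, g k
      = ((c : ℝ) - 1) * g c - ((c : ℝ) + 1) * g (c + 1) := by
  rw [sum_Icc_eq_add_sum_Icc_succ g (by omega : c ≤ m), sum_Icc_eq_add_sum_Icc_succ g h]
  ring

theorem Vn_concave_general (n : ℕ) (μ : ℕ → ℝ)
    (hmono : ∀ k, μ k ≤ μ (k + 1))
    (V : ℕ → ℝ)
    (hV : ∀ c, V c = (∑ k ∈ Finset.Icc c (n - 1),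
        μ k * ((c : ℝ) - 1) / (((k : ℝ) - 1) * k)) + ((c : ℝ) - 1) / ((n : ℝ) - 1) * μ 1) :
    ∀ c : ℕ, 2 ≤ c → c ≤ n - 2 →
      V (c + 2) - 2 * V (c + 1) + V c = -(μ (c + 1) - μ c) / c ∧
      V (c + 2) - 2 * V (c + 1) + V c ≤ 0 := by
  intro c hc hcn
  set g : ℕ → ℝ := fun k ↦ μ k / (((k : ℝ) - 1) * k)
  have hV' : ∀ d : ℕ, V d = ((d : ℝ) - 1) * ∑ k ∈ Icc d (n - 1), g k
      + ((d : ℝ) - 1) / ((n : ℝ) - 1) * μ 1 := fun d ↦ by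
    rw [hV, mul_sum]
    congr 1
    exact sum_congr rfl fun k _ ↦ by simp only [g]; ring
  have hc' : (2 : ℝ) ≤ c := by exact_mod_cast hc
  have hc1 : (c : ℝ) - 1 ≠ 0 := by linarith
  have key : V (c + 2) - 2 * V (c + 1) + V c = -(μ (c + 1) - μ c) / c := calc
    _ = ((c : ℝ) - 1) * g c - ((c : ℝ) + 1) * g (c + 1) := by
      rw [hV', hV', hV']
      push_cast
      linear_combination second_diff_mul_sum_Icc g (by omega : c + 1 ≤ n - 1)
    _ = _ := by
      simp only [g]
      push_cast
      rw [add_sub_cancel_right]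
      field_simp
      ring
  refine ⟨key, key ▸ div_nonpos_of_nonpos_of_nonneg ?_ (by positivity)⟩
  linarith [hmono c]

theorem Vn_concave (n : ℕ) (hn : 4 ≤ n) (μ : ℕ → ℝ)
    (hmono : ∀ k, μ k ≤ μ (k + 1))
    (V : ℕ → ℝ)
    (hV : ∀ c, V c = (∑ k ∈ Finset.Icc c (n - 1),
        μ k * ((c : ℝ) - 1) / (((k : ℝ) - 1) * k)) + ((c : ℝ) - 1) / ((n : ℝ) - 1) * μ 1) :
    ∀ c : ℕ, 2 ≤ c → c ≤ n - 2 →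
      V (c + 2) - 2 * V (c + 1) + V c = -(μ (c + 1) - μ c) / c ∧
      V (c + 2) - 2 * V (c + 1) + V c ≤ 0 :=
  Vn_concave_general n μ hmono V hV
end

section
/- Let μ : ℕ → ℝ be nondecreasing and let ΔV_n(c) := ∑_{k=c}^{n-1} (μ_{k+1} - μ_k)/k - (μ_n - μ_1)/(n-1). If the sequence of differences μ_{k+1} - μ_k is nonincreasing, then ΔV_n(c) ≤ (μ_{c+1} - μ_c)·(∑_{k=c}^{n-1} 1/k - 1). In particular, if ∑_{k=c}^{n-1} 1/k ≤ 1 then ΔV_n(c) ≤ 0. -/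
/-!
Write `d k = μ (k + 1) - μ k`, so that `μ n - μ 1 = ∑_{k=1}^{n-1} d k` and concavity makes `d`
nonincreasing. Splitting `d k = d c + (d k - d c)`, the terms `(d k - d c) / k` with `k ≥ c` are
nonpositive, so replacing `1 / k` by the smaller `1 / (n - 1)` only increases them; adding the
nonnegative terms with `k < c` turns their sum into `(μ n - μ 1) / (n - 1) - d c`.
-/

open Finset

theorem antitoneOn_Icc_of_succ_le {α : Type*} [Preorder α] {d : ℕ → α} {a b : ℕ}
    (h : ∀ k, a ≤ k → k < b → d (k + 1) ≤ d k) : AntitoneOn d (Set.Icc a b) := by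
  rintro j ⟨hj, -⟩ k ⟨-, hk⟩ hjk
  induction k, hjk using Nat.le_induction with
  | base => exact le_rfl
  | succ k hjk ih => exact (h k (hj.trans hjk) hk).trans (ih (by omega))

theorem sum_div_le_of_antitoneOn {d : ℕ → ℝ} {c m : ℕ} (hd : AntitoneOn d (Set.Icc 1 m))
    (hc : 1 ≤ c) (hcm : c ≤ m) :
    ∑ k ∈ Icc c m, d k / k ≤
      d c * (∑ k ∈ Icc c m, (1 : ℝ) / k - 1) + (∑ k ∈ Icc 1 m, d k) / m := by
  have hm : (0 : ℝ) < m := by exact_mod_cast hc.trans hcm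
  have hc_mem : c ∈ Set.Icc 1 m := ⟨hc, hcm⟩
  have tail_le : ∀ k ∈ Icc c m, (d k - d c) / k ≤ (d k - d c) / m := by
    intro k hk
    obtain ⟨hck, hkm⟩ := mem_Icc.mp hk
    have hk_pos : (0 : ℝ) < k := by exact_mod_cast hc.trans hck
    rw [div_eq_mul_one_div _ (k : ℝ), div_eq_mul_one_div _ (m : ℝ)]
    exact mul_le_mul_of_nonpos_left (one_div_le_one_div_of_le hk_pos (by exact_mod_cast hkm))
      (sub_nonpos.mpr (hd hc_mem ⟨hc.trans hck, hkm⟩ hck))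
  have head_nonneg : ∀ k ∈ Icc 1 m, k ∉ Icc c m → 0 ≤ (d k - d c) / m := by
    intro k hk hk_out
    obtain ⟨h1k, hkm⟩ := mem_Icc.mp hk
    have hkc : k ≤ c := by simp only [mem_Icc, not_and_or, not_le] at hk_out; omega
    exact div_nonneg (sub_nonneg.mpr (hd ⟨h1k, hkm⟩ hc_mem hkc)) hm.le
  calc ∑ k ∈ Icc c m, d k / k
      = d c * ∑ k ∈ Icc c m, (1 : ℝ) / k + ∑ k ∈ Icc c m, (d k - d c) / k := by
        rw [mul_sum, ← sum_add_distrib]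
        exact sum_congr rfl fun k _ => by ring
    _ ≤ d c * ∑ k ∈ Icc c m, (1 : ℝ) / k + ∑ k ∈ Icc 1 m, (d k - d c) / m := by
        gcongr
        exact (sum_le_sum tail_le).trans
          (sum_le_sum_of_subset_of_nonneg (Icc_subset_Icc_left hc) head_nonneg)
    _ = d c * (∑ k ∈ Icc c m, (1 : ℝ) / k - 1) + (∑ k ∈ Icc 1 m, d k) / m := by
        rw [← sum_div, sum_sub_distrib, sum_const, Nat.card_Icc, Nat.add_sub_cancel, nsmul_eq_mul]
        field_simp
        ring

theorem deltaV_upper_bound (n : ℕ) (μ : ℕ → ℝ)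
    (hmono : ∀ k, 1 ≤ k → k ≤ n - 1 → μ k ≤ μ (k + 1))
    (hconc : ∀ k, 1 ≤ k → k ≤ n - 1 → μ (k + 2) - μ (k + 1) ≤ μ (k + 1) - μ k)
    (ΔV : ℕ → ℝ)
    (hΔV : ∀ c, ΔV c = (∑ k ∈ Finset.Icc c (n - 1), (μ (k + 1) - μ k) / k)
        - (μ n - μ 1) / ((n : ℝ) - 1)) :
    ∀ c : ℕ, 1 ≤ c → c ≤ n - 1 →
      ΔV c ≤ (μ (c + 1) - μ c) * ((∑ k ∈ Finset.Icc c (n - 1), (1 : ℝ) / k) - 1) ∧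
      ((∑ k ∈ Finset.Icc c (n - 1), (1 : ℝ) / k) ≤ 1 → ΔV c ≤ 0) := by
  intro c hc hcn
  have hd : AntitoneOn (fun k => μ (k + 1) - μ k) (Set.Icc 1 (n - 1)) :=
    antitoneOn_Icc_of_succ_le fun k hk hkn => hconc k hk hkn.le
  have htel : ∑ k ∈ Icc 1 (n - 1), (μ (k + 1) - μ k) = μ n - μ 1 := by
    rw [sum_Icc_sub (by omega), Nat.sub_add_cancel (by omega)]
  have hcast : ((n - 1 : ℕ) : ℝ) = (n : ℝ) - 1 := by rw [Nat.cast_sub (by omega), Nat.cast_one]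
  have hbound := sum_div_le_of_antitoneOn hd hc hcn
  rw [htel, hcast] at hbound
  have hΔVc : ΔV c ≤ (μ (c + 1) - μ c) * ((∑ k ∈ Icc c (n - 1), (1 : ℝ) / k) - 1) := by
    rw [hΔV c]
    linarith
  refine ⟨hΔVc, fun hS => hΔVc.trans ?_⟩
  exact mul_nonpos_of_nonneg_of_nonpos (sub_nonneg.mpr (hmono c hc hcn)) (by linarith)
end

section
/- Let X_1, ..., X_n be exchangeable, integrable real random variables with almost surely distinct values, and set μ_k := E[max(X_1,...,X_k)]. Then the sequence of increments is nonincreasing: μ_{k+2} - μ_{k+1} ≤ μ_{k+1} - μ_k for all 1 ≤ k ≤ n-2. -/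
/-!
Write `M_j` for the maximum of the first `j` variables. Since `a ↦ (a ⊔ c) - a` is antitone and
`M_k ≤ M_{k+1}`, pointwise `M_{k+2} - M_{k+1} = (M_{k+1} ⊔ X_{k+2}) - M_{k+1}` is at most
`(M_k ⊔ X_{k+2}) - M_k`. Swapping `X_{k+1}` and `X_{k+2}` does not change the law, so
`E[M_k ⊔ X_{k+2}] = E[M_k ⊔ X_{k+1}] = μ_{k+1}`, and taking expectations gives the claim.
-/

open MeasureTheory ProbabilityTheory

theorem antitone_sup_sub_self {α : Type*} [AddCommGroup α] [Lattice α] [IsOrderedAddMonoid α]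
    (c : α) : Antitone fun a : α => a ⊔ c - a := by
  intro a b hab
  simp only [sup_sub, sub_self]
  exact sup_le_sup_left (sub_le_sub_left hab c) 0

theorem partialSups_congr_of_le {ι α : Type*} [Preorder ι] [LocallyFiniteOrderBot ι]
    [SemilatticeSup α] {f g : ι → α} {m : ι} (h : ∀ i ≤ m, f i = g i) :
    partialSups f m = partialSups g m := by
  simp only [partialSups_apply]
  exact Finset.sup'_congr _ rfl fun i hi => h i (Finset.mem_Iic.1 hi)

theorem partialSups_add_two_sub_le {α : Type*} [AddCommGroup α] [Lattice α]
    [IsOrderedAddMonoid α] (f : ℕ → α) (m : ℕ) :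
    partialSups f (m + 2) - partialSups f (m + 1)
      ≤ partialSups f m ⊔ f (m + 2) - partialSups f m :=
  partialSups_add_one f (m + 1) ▸ antitone_sup_sub_self _ (partialSups_monotone f m.le_succ)

theorem Measurable.partialSups {α δ : Type*} [MeasurableSpace α] [SemilatticeSup α]
    [MeasurableSup₂ α] [MeasurableSpace δ] {f : ℕ → δ → α}
    (hf : ∀ i, Measurable (f i)) (m : ℕ) :
    Measurable fun x => partialSups (fun i => f i x) m := by
  simp only [← Pi.partialSups_apply f m, partialSups_apply]
  exact Finset.measurable_sup' _ fun i _ => hf i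

theorem MeasureTheory.Integrable.partialSups {Ω E : Type*} [MeasurableSpace Ω] {P : Measure Ω}
    [NormedAddCommGroup E] [Lattice E] [HasSolidNorm E] [IsOrderedAddMonoid E]
    {f : ℕ → Ω → E} {m : ℕ} (hf : ∀ i ≤ m, Integrable (f i) P) :
    Integrable (fun ω => partialSups (fun i => f i ω) m) P := by
  induction m with
  | zero => simpa using hf 0 le_rfl
  | succ m ih =>
    simp only [partialSups_add_one]
    exact (ih fun i hi => hf i (by omega)).sup (hf (m + 1) le_rfl)

theorem integral_partialSups_sup_eq_of_map_swap {Ω : Type*} [MeasurableSpace Ω]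
    {P : Measure Ω} {X : ℕ → Ω → ℝ} (hX : ∀ i, Measurable (X i)) {m a b : ℕ}
    (ha : m + 1 < a) (hb : m + 1 < b)
    (hswap : P.map (fun ω i => X (Equiv.swap a b i) ω) = P.map (fun ω i => X i ω)) :
    ∫ ω, partialSups (fun i => X (i + 1) ω) m ⊔ X a ω ∂P
      = ∫ ω, partialSups (fun i => X (i + 1) ω) m ⊔ X b ω ∂P := by
  set g : (ℕ → ℝ) → ℝ := fun x => partialSups (fun i => x (i + 1)) m ⊔ x b
  have hg : Measurable g :=
    (Measurable.partialSups (fun i => measurable_pi_apply (i + 1)) m).sup (measurable_pi_apply b)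
  have hident : IdentDistrib (fun ω i => X (Equiv.swap a b i) ω) (fun ω i => X i ω) P P :=
    ⟨(measurable_pi_lambda _ fun i => hX _).aemeasurable,
      (measurable_pi_lambda _ fun i => hX i).aemeasurable, hswap⟩
  have hfix : ∀ ω, partialSups (fun i => X (Equiv.swap a b (i + 1)) ω) m
      = partialSups (fun i => X (i + 1) ω) m := fun ω =>
    partialSups_congr_of_le fun i hi => by rw [Equiv.swap_apply_of_ne_of_ne (by omega) (by omega)]
  simpa [g, Function.comp_def, hfix] using (hident.comp hg).integral_eq

theorem exchangeable_increments_nonincreasing_general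
    {Ω : Type*} [MeasurableSpace Ω] (P : Measure Ω)
    (n : ℕ) (X : ℕ → Ω → ℝ)
    (hmeas : ∀ i, Measurable (X i))
    (hint : ∀ i, 1 ≤ i → i ≤ n → Integrable (X i) P)
    (hexch : ∀ σ : Equiv.Perm ℕ, (∀ i, ¬(1 ≤ i ∧ i ≤ n) → σ i = i) →
        Measure.map (fun ω => fun i => X (σ i) ω) P = Measure.map (fun ω => fun i => X i ω) P)
    (μ : ℕ → ℝ)
    (hμ : ∀ k, μ k = ∫ ω, (partialSups (fun i => X (i + 1) ω)) (k - 1) ∂P) :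
    ∀ k, 1 ≤ k → k ≤ n - 2 → μ (k + 2) - μ (k + 1) ≤ μ (k + 1) - μ k := by
  intro k hk1 hk2
  obtain ⟨m, rfl⟩ : ∃ m, k = m + 1 := ⟨k - 1, by omega⟩
  set M : ℕ → Ω → ℝ := fun j ω => partialSups (fun i => X (i + 1) ω) j
  have hμM : ∀ j, μ (j + 1) = ∫ ω, M j ω ∂P := fun j => hμ (j + 1)
  have hMint : ∀ j ≤ m + 2, Integrable (M j) P := fun j hj =>
    Integrable.partialSups fun i hi => hint (i + 1) (by omega) (by omega)
  have hTint : Integrable (fun ω => M m ω ⊔ X (m + 3) ω) P :=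
    (hMint m (by omega)).sup (hint (m + 3) (by omega) (by omega))
  have hswap : ∫ ω, M m ω ⊔ X (m + 3) ω ∂P = ∫ ω, M (m + 1) ω ∂P := by
    have hσ : ∀ i, ¬(1 ≤ i ∧ i ≤ n) → Equiv.swap (m + 3) (m + 2) i = i := fun i hi =>
      Equiv.swap_apply_of_ne_of_ne (by rintro rfl; omega) (by rintro rfl; omega)
    simpa only [M, partialSups_add_one] using
      integral_partialSups_sup_eq_of_map_swap hmeas (by omega) (by omega) (hexch _ hσ)
  calc μ (m + 1 + 2) - μ (m + 1 + 1) = ∫ ω, M (m + 2) ω - M (m + 1) ω ∂P := by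
        rw [hμM, hμM, integral_sub (hMint _ le_rfl) (hMint _ (by omega))]
    _ ≤ ∫ ω, M m ω ⊔ X (m + 3) ω - M m ω ∂P :=
        integral_mono ((hMint _ le_rfl).sub (hMint _ (by omega)))
          (hTint.sub (hMint m (by omega)))
          fun ω => partialSups_add_two_sub_le _ m
    _ = μ (m + 1 + 1) - μ (m + 1) := by
        rw [integral_sub hTint (hMint m (by omega)), hswap, hμM, hμM]

theorem exchangeable_increments_nonincreasing
    {Ω : Type*} [MeasurableSpace Ω] (P : Measure Ω) [IsProbabilityMeasure P]
    (n : ℕ) (X : ℕ → Ω → ℝ)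
    (hmeas : ∀ i, Measurable (X i))
    (hint : ∀ i, 1 ≤ i → i ≤ n → Integrable (X i) P)
    (hexch : ∀ σ : Equiv.Perm ℕ, (∀ i, ¬(1 ≤ i ∧ i ≤ n) → σ i = i) →
        Measure.map (fun ω => fun i => X (σ i) ω) P = Measure.map (fun ω => fun i => X i ω) P)
    (hdistinct : ∀ i j, 1 ≤ i → i ≤ n → 1 ≤ j → j ≤ n → i ≠ j →
        ∀ᵐ ω ∂P, X i ω ≠ X j ω)
    (μ : ℕ → ℝ)
    (hμ : ∀ k, μ k = ∫ ω, (partialSups (fun i => X (i + 1) ω)) (k - 1) ∂P) :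
    ∀ k, 1 ≤ k → k ≤ n - 2 → μ (k + 2) - μ (k + 1) ≤ μ (k + 1) - μ k :=
  exchangeable_increments_nonincreasing_general P n X hmeas hint hexch μ hμ
end

section
/- Under the assumptions of the previous statement (exchangeable, integrable, a.s. distinct random variables with μ_k := E[max(X_1,...,X_k)]), the sequence (μ_k) is completely monotone up to index n: for k + j ≤ n, the j-th forward difference Δ^j μ_k is nonnegative when j is odd and nonpositive when j is even (j ≥ 2). -/
/-!
Put `A = {1, …, k}` and `J = {k + 1, …, k + j}`. Exchangeability makes the expected maximum over
any `m`-element subset of `{1, …, n}` equal to `μ m`, so the `j`-th forward difference of `μ` at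
`k` is `(-1) ^ j • ∑_{T ⊆ J} (-1) ^ #T • E[max_{A ∪ T} X]`. Pointwise, adding one index of `J` at
a time gives the inclusion–exclusion identity
`∑_{T ⊆ J} (-1) ^ #T • max_{A ∪ T} x = -(min_J x - max_A x)⁺`,
so the difference equals `(-1) ^ (j + 1) • E[(min_J X - max_A X)⁺]` and has the sign of
`(-1) ^ (j + 1)`.
-/

open MeasureTheory Finset Equiv

theorem Finset.exists_perm_image_eq {α : Type*} [DecidableEq α] {s t u : Finset α}
    (hs : s ⊆ u) (ht : t ⊆ u) (hst : #s = #t) :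
    ∃ σ : Perm α, (∀ a ∉ u, σ a = a) ∧ s.image σ = t := by
  have card_subtype_of_subset : ∀ {v : Finset α}, v ⊆ u → #(v.subtype (· ∈ u)) = #v :=
    fun hv => by rw [card_subtype, filter_true_of_mem hv]
  obtain ⟨σ, hσ⟩ := (Set.powersetCard.isPretransitive (α := u) (n := #s)).exists_smul_eq
    (Set.powersetCard.ofCard (card_subtype_of_subset hs))
    (Set.powersetCard.ofCard ((card_subtype_of_subset ht).trans hst.symm))
  have hσ' : (s.subtype (· ∈ u)).image σ = t.subtype (· ∈ u) := by
    simpa [Set.powersetCard.ofCard, smul_finset_def, Perm.smul_def] using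
      congrArg Subtype.val hσ
  refine ⟨Perm.ofSubtype σ, fun a ha => Perm.ofSubtype_apply_of_not_mem σ ha, ?_⟩
  rw [← subtype_map_of_mem hs, ← subtype_map_of_mem ht, ← hσ', map_eq_image, map_eq_image,
    image_image, image_image]
  exact image_congr fun a _ => Perm.ofSubtype_apply_coe σ a

theorem partialSups_shift_eq_sup'_Icc {α : Type*} [SemilatticeSup α] (x : ℕ → α) {m : ℕ}
    (hm : 1 ≤ m) :
    partialSups (fun i => x (i + 1)) (m - 1) = (Icc 1 m).sup' (nonempty_Icc.2 hm) x := by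
  refine eq_of_forall_ge_iff fun c => ?_
  simp only [partialSups_le_iff, Finset.sup'_le_iff, mem_Icc]
  exact ⟨fun h i hi => by simpa [Nat.sub_add_cancel hi.1] using h (i - 1) (by omega),
    fun h i hi => h (i + 1) (by omega)⟩

theorem Finset.sum_range_neg_one_pow_sub_mul_choose_mul {R α : Type*} [CommRing R]
    (J : Finset α) (f : ℕ → R) :
    ∑ i ∈ range (#J + 1), (-1) ^ (#J - i) * (#J).choose i * f i =
      (-1) ^ #J * ∑ T ∈ J.powerset, (-1) ^ #T * f #T := by
  rw [sum_powerset_apply_card (fun m => (-1) ^ m * f m), mul_sum]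
  refine sum_congr rfl fun i hi => ?_
  have hsign : (-1 : R) ^ #J * (-1) ^ i = (-1) ^ (#J - i) := by
    rw [← pow_add, show #J + i = 2 * i + (#J - i) by have := mem_range.1 hi; omega, pow_add,
      pow_mul, neg_one_sq, one_pow, one_mul]
  rw [nsmul_eq_mul, ← hsign]
  ring

section LinearOrderedRing

variable {R : Type*} [CommRing R] [LinearOrder R] [IsStrictOrderedRing R]

theorem posPart_sub_eq_posPart_sub_max_add_posPart_min_sub (a b c : R) :
    (c - a)⁺ = (c - max b a)⁺ + (min b c - a)⁺ := by
  rcases le_total b a with hba | hab <;> rcases le_total c b with hcb | hbc <;>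
    rcases le_total c a with hca | hac <;>
    simp [*] <;> linarith

theorem Finset.sum_powerset_neg_one_pow_card_mul_sup'_union {ι : Type*} [DecidableEq ι]
    (x : ι → R) {J : Finset ι} (hJ : J.Nonempty) {A : Finset ι} (hA : A.Nonempty) :
    ∑ T ∈ J.powerset, (-1) ^ #T * (A ∪ T).sup' (hA.mono subset_union_left) x =
      -(J.inf' hJ x - A.sup' hA x)⁺ := by
  induction hJ using Nonempty.cons_induction generalizing A with
  | singleton y =>
    rw [inf'_singleton, ← insert_empty_eq y, sum_powerset_insert (notMem_empty y)]
    simp only [powerset_empty, sum_singleton, card_empty, union_empty, insert_empty_eq,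
      card_singleton]
    rw [sup'_congr _ (union_singleton y A) fun _ _ => rfl, sup'_insert (H := hA)]
    rcases le_total (x y) (A.sup' hA x) with h | h
    · rw [max_eq_right h, posPart_eq_zero.2 (sub_nonpos.2 h)]
      ring
    · rw [max_eq_left h, posPart_eq_self.2 (sub_nonneg.2 h)]
      ring
  | cons y s hy hs ih =>
    have hyA : (insert y A).Nonempty := insert_nonempty y A
    have insert_term : ∀ T ∈ s.powerset,
        (-1) ^ #(insert y T) * (A ∪ insert y T).sup' (hA.mono subset_union_left) x =
          -((-1) ^ #T * (insert y A ∪ T).sup' (hyA.mono subset_union_left) x) := by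
      intro T hT
      have hyT : y ∉ T := fun h => hy (mem_powerset.1 hT h)
      rw [card_insert_of_notMem hyT, sup'_congr _ (insert_union_comm A T y).symm (fun _ _ => rfl)]
      ring
    rw [inf'_cons hs, cons_eq_insert, sum_powerset_insert hy, sum_congr rfl insert_term,
      sum_neg_distrib, ih hA, ih hyA, sup'_insert (H := hA)]
    linarith [posPart_sub_eq_posPart_sub_max_add_posPart_min_sub (A.sup' hA x) (x y) (s.inf' hs x)]

end LinearOrderedRing

section Exchangeable

variable {Ω ι : Type*} [MeasurableSpace Ω] {P : Measure Ω} {X : ι → Ω → ℝ}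

theorem MeasureTheory.integrable_finset_sup' {s : Finset ι} (hs : s.Nonempty)
    (hX : ∀ i ∈ s, Integrable (X i) P) : Integrable (fun ω => s.sup' hs (X · ω)) P := by
  convert sup'_induction hs X (p := fun g => Integrable g P) (fun _ hf _ hg => hf.sup hg) hX
    using 1
  exact funext fun ω => by rw [Finset.sup'_apply]

theorem MeasureTheory.integral_sup'_image_of_map_eq [DecidableEq ι] (hX : ∀ i, Measurable (X i))
    {f : ι → ι} (hf : P.map (fun ω i => X (f i) ω) = P.map (fun ω i => X i ω))
    {s : Finset ι} (hs : s.Nonempty) :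
    ∫ ω, (s.image f).sup' (hs.image f) (X · ω) ∂P = ∫ ω, s.sup' hs (X · ω) ∂P := by
  have hsup : Measurable fun x : ι → ℝ => s.sup' hs x := by
    convert measurable_sup' hs (f := fun i (x : ι → ℝ) => x i) fun i _ => measurable_pi_apply i
      using 1
    exact funext fun x => by rw [Finset.sup'_apply]
  calc ∫ ω, (s.image f).sup' (hs.image f) (X · ω) ∂P
      = ∫ x, s.sup' hs x ∂(P.map fun ω i => X (f i) ω) := by
        rw [integral_map (measurable_pi_lambda _ fun i => hX (f i)).aemeasurable
          hsup.aestronglyMeasurable]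
        simp only [sup'_image]
        rfl
    _ = ∫ ω, s.sup' hs (X · ω) ∂P := by
        rw [hf, integral_map (measurable_pi_lambda _ hX).aemeasurable hsup.aestronglyMeasurable]

theorem MeasureTheory.integral_sup'_eq_of_card_eq [DecidableEq ι] (hX : ∀ i, Measurable (X i))
    {u : Finset ι} (hexch : ∀ σ : Perm ι, (∀ i ∉ u, σ i = i) →
      P.map (fun ω i => X (σ i) ω) = P.map (fun ω i => X i ω))
    {s t : Finset ι} (hs : s ⊆ u) (ht : t ⊆ u) (hst : #s = #t) (hs₀ : s.Nonempty)
    (ht₀ : t.Nonempty) :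
    ∫ ω, s.sup' hs₀ (X · ω) ∂P = ∫ ω, t.sup' ht₀ (X · ω) ∂P := by
  obtain ⟨σ, hσu, rfl⟩ := exists_perm_image_eq hs ht hst
  exact (integral_sup'_image_of_map_eq hX (hexch σ hσu) hs₀).symm

theorem MeasureTheory.sum_powerset_neg_one_pow_card_mul_integral_sup'_union [DecidableEq ι]
    {A J : Finset ι} (hA : A.Nonempty) (hJ : J.Nonempty) (hX : ∀ i ∈ A ∪ J, Integrable (X i) P) :
    ∑ T ∈ J.powerset, (-1) ^ #T * ∫ ω, (A ∪ T).sup' (hA.mono subset_union_left) (X · ω) ∂P =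
      -∫ ω, (J.inf' hJ (X · ω) - A.sup' hA (X · ω))⁺ ∂P := by
  have hint : ∀ T ∈ J.powerset,
      Integrable (fun ω => (-1) ^ #T * (A ∪ T).sup' (hA.mono subset_union_left) (X · ω)) P :=
    fun T hT => (integrable_finset_sup' _ fun i hi =>
      hX i (union_subset_union_right (mem_powerset.1 hT) hi)).const_mul _
  simp_rw [← integral_const_mul]
  rw [← integral_finsetSum _ hint, ← integral_neg]
  congr with ω
  exact sum_powerset_neg_one_pow_card_mul_sup'_union (X · ω) hJ hA

end Exchangeable

section ExchangeableSequence

variable {Ω : Type*} [MeasurableSpace Ω] {P : Measure Ω} {X : ℕ → Ω → ℝ}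

theorem MeasureTheory.integral_sup'_eq_integral_partialSups
    (hX : ∀ i, Measurable (X i)) {n : ℕ} (hexch : ∀ σ : Perm ℕ, (∀ i ∉ Icc 1 n, σ i = i) →
      P.map (fun ω i => X (σ i) ω) = P.map (fun ω i => X i ω))
    {s : Finset ℕ} (hs : s ⊆ Icc 1 n) (hs₀ : s.Nonempty) :
    ∫ ω, s.sup' hs₀ (X · ω) ∂P = ∫ ω, partialSups (fun i => X (i + 1) ω) (#s - 1) ∂P := by
  have hcard : #s ≤ n := by simpa using card_le_card hs
  rw [integral_congr_ae (ae_of_all _ fun ω => partialSups_shift_eq_sup'_Icc (X · ω) hs₀.card_pos)]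
  exact integral_sup'_eq_of_card_eq hX hexch hs (Icc_subset_Icc_right hcard) (by simp) _ _

theorem MeasureTheory.sum_range_neg_one_pow_mul_choose_mul_integral_partialSups
    (hX : ∀ i, Measurable (X i)) {n : ℕ}
    (hint : ∀ i ∈ Icc 1 n, Integrable (X i) P) (hexch : ∀ σ : Perm ℕ, (∀ i ∉ Icc 1 n, σ i = i) →
      P.map (fun ω i => X (σ i) ω) = P.map (fun ω i => X i ω))
    {k j : ℕ} (hk : 1 ≤ k) (hj : 1 ≤ j) (hkj : k + j ≤ n) :
    ∑ i ∈ range (j + 1), (-1 : ℝ) ^ (j - i) * j.choose i *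
        ∫ ω, partialSups (fun i => X (i + 1) ω) (k + i - 1) ∂P =
      (-1) ^ (j + 1) * ∫ ω, ((Icc (k + 1) (k + j)).inf' (nonempty_Icc.2 (by omega)) (X · ω) -
        (Icc 1 k).sup' (nonempty_Icc.2 hk) (X · ω))⁺ ∂P := by
  set A := Icc 1 k
  set J := Icc (k + 1) (k + j)
  have hA : A.Nonempty := nonempty_Icc.2 hk
  have hJcard : #J = j := by simp [J]
  have hAJ : A ∪ J ⊆ Icc 1 n := union_subset (Icc_subset_Icc_right (by omega))
    (Icc_subset_Icc (by omega) hkj)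
  have hmax_union : ∀ T ∈ J.powerset,
      ∫ ω, partialSups (fun i => X (i + 1) ω) (k + #T - 1) ∂P =
        ∫ ω, (A ∪ T).sup' (hA.mono subset_union_left) (X · ω) ∂P := by
    intro T hT
    have hTJ := mem_powerset.1 hT
    have hdisj : Disjoint A T := disjoint_of_subset_right hTJ <| disjoint_left.2 fun i hiA hiJ => by
      simp only [A, J, mem_Icc] at hiA hiJ
      omega
    rw [integral_sup'_eq_integral_partialSups hX hexch ((union_subset_union_right hTJ).trans hAJ),
      card_union_of_disjoint hdisj]
    simp [A]
  conv_lhs => rw [← hJcard]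
  rw [sum_range_neg_one_pow_sub_mul_choose_mul J
      (fun i => ∫ ω, partialSups (fun i => X (i + 1) ω) (k + i - 1) ∂P),
    sum_congr rfl fun T hT => by rw [hmax_union T hT],
    sum_powerset_neg_one_pow_card_mul_integral_sup'_union hA (nonempty_Icc.2 (by omega))
      fun i hi => hint i (hAJ hi), hJcard]
  ring

end ExchangeableSequence

theorem complete_monotonicity_expected_max_general
    {Ω : Type*} [MeasurableSpace Ω] (P : Measure Ω)
    (n : ℕ) (X : ℕ → Ω → ℝ)
    (hmeas : ∀ i, Measurable (X i))
    (hint : ∀ i, 1 ≤ i → i ≤ n → Integrable (X i) P)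
    (hexch : ∀ σ : Equiv.Perm ℕ, (∀ i, ¬(1 ≤ i ∧ i ≤ n) → σ i = i) →
        Measure.map (fun ω => fun i => X (σ i) ω) P = Measure.map (fun ω => fun i => X i ω) P)
    (μ : ℕ → ℝ)
    (hμ : ∀ k, μ k = ∫ ω, (partialSups (fun i => X (i + 1) ω)) (k - 1) ∂P) :
    ∀ k j : ℕ, 1 ≤ k → k + j ≤ n →
      (Odd j →
        0 ≤ ∑ i ∈ Finset.range (j + 1), (-1 : ℝ) ^ (j - i) * (j.choose i) * μ (k + i)) ∧
      (Even j → 2 ≤ j →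
        ∑ i ∈ Finset.range (j + 1), (-1 : ℝ) ^ (j - i) * (j.choose i) * μ (k + i) ≤ 0) := by
  intro k j hk hkj
  rcases Nat.eq_zero_or_pos j with rfl | hj
  · simp
  simp only [hμ]
  rw [sum_range_neg_one_pow_mul_choose_mul_integral_partialSups hmeas
    (fun i hi => hint i (mem_Icc.1 hi).1 (mem_Icc.1 hi).2)
    (fun σ hσ => hexch σ fun i hi => hσ i fun h => hi (mem_Icc.1 h)) hk hj hkj]
  refine ⟨fun hodd => ?_, fun heven _ => ?_⟩
  · rw [hodd.add_one.neg_one_pow, one_mul]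
    exact integral_nonneg fun ω => posPart_nonneg _
  · rw [heven.add_one.neg_one_pow, neg_one_mul, neg_nonpos]
    exact integral_nonneg fun ω => posPart_nonneg _

theorem complete_monotonicity_expected_max
    {Ω : Type*} [MeasurableSpace Ω] (P : Measure Ω) [IsProbabilityMeasure P]
    (n : ℕ) (X : ℕ → Ω → ℝ)
    (hmeas : ∀ i, Measurable (X i))
    (hint : ∀ i, 1 ≤ i → i ≤ n → Integrable (X i) P)
    (hexch : ∀ σ : Equiv.Perm ℕ, (∀ i, ¬(1 ≤ i ∧ i ≤ n) → σ i = i) →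
        Measure.map (fun ω => fun i => X (σ i) ω) P = Measure.map (fun ω => fun i => X i ω) P)
    (hdistinct : ∀ i j, 1 ≤ i → i ≤ n → 1 ≤ j → j ≤ n → i ≠ j →
        ∀ᵐ ω ∂P, X i ω ≠ X j ω)
    (μ : ℕ → ℝ)
    (hμ : ∀ k, μ k = ∫ ω, (partialSups (fun i => X (i + 1) ω)) (k - 1) ∂P) :
    ∀ k j : ℕ, 1 ≤ k → k + j ≤ n →
      (Odd j →
        0 ≤ ∑ i ∈ Finset.range (j + 1), (-1 : ℝ) ^ (j - i) * (j.choose i) * μ (k + i)) ∧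
      (Even j → 2 ≤ j →
        ∑ i ∈ Finset.range (j + 1), (-1 : ℝ) ^ (j - i) * (j.choose i) * μ (k + i) ≤ 0) :=
  complete_monotonicity_expected_max_general P n X hmeas hint hexch μ hμ
end

section
/- For exchangeable random variables X_1, ..., X_m, the expected maximum of the first i satisfies μ_i = C(m, i)^{-1} ∑_{l=i}^{m} μ_{l:m} C(l-1, i-1), where μ_{l:m} is the expectation of the l-th order statistic of X_1,...,X_m. -/
open MeasureTheory ProbabilityTheory Finset

/-!
Sum `max_{j ∈ S} X_j` over all `i`-element subsets `S` of `{1, …, m}`. By exchangeability each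
summand has the law of `max(X_1, …, X_i)`, so the sum has expectation `C(m, i) μ_i`. Pathwise, with
the values sorted as `x_(1) ≤ … ≤ x_(m)`, the maximum over `S` is `x_(l)` for the largest rank `l`
occurring in `S`, and exactly `C(l - 1, i - 1)` subsets of size `i` have largest rank `l`. The order
statistics are integrable since `x_(l)` is the minimum, over `l`-element subsets, of their maxima.
-/

noncomputable def maxOver {ι : Type*} (y : ι → ℝ) (S : Finset ι) : ℝ :=
  if h : S.Nonempty then S.sup' h y else 0

section maxOver

variable {ι κ : Type*} {y : ι → ℝ} {S : Finset ι}

theorem maxOver_of_nonempty (h : S.Nonempty) : maxOver y S = S.sup' h y := dif_pos h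

theorem le_maxOver {t : ι} (ht : t ∈ S) : y t ≤ maxOver y S := by
  rw [maxOver_of_nonempty ⟨t, ht⟩]
  exact le_sup' y ht

theorem maxOver_map (e : κ ↪ ι) (S : Finset κ) : maxOver y (S.map e) = maxOver (y ∘ e) S := by
  by_cases h : S.Nonempty
  · rw [maxOver_of_nonempty (h.map), maxOver_of_nonempty h, sup'_map]
  · rw [not_nonempty_iff_eq_empty] at h
    simp [h, maxOver]

theorem Monotone.maxOver_eq {α : Type*} [Preorder α] {s : α → ℝ} (hs : Monotone s) {S : Finset α}
    {p : α} (hp : IsGreatest (S : Set α) p) : maxOver s S = s p :=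
  le_antisymm ((maxOver_of_nonempty ⟨p, hp.1⟩).trans_le (sup'_le _ _ fun _ hq => hs (hp.2 hq)))
    (le_maxOver hp.1)

theorem exists_maxOver_eq (h : S.Nonempty) (y : ι → ℝ) : ∃ t ∈ S, maxOver y S = y t := by
  rw [maxOver_of_nonempty h]
  exact exists_mem_eq_sup' h y

theorem continuous_maxOver (S : Finset ι) : Continuous fun v : ι → ℝ => maxOver v S := by
  by_cases h : S.Nonempty
  · simp only [maxOver_of_nonempty h]
    exact Continuous.finset_sup'_apply h fun t _ => continuous_apply t
  · simpa [maxOver, h] using continuous_const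

theorem sum_powersetCard_maxOver_comp_perm [Fintype ι] [DecidableEq ι] (k : ℕ) (σ : Equiv.Perm ι) :
    ∑ S ∈ powersetCard k univ, maxOver (y ∘ σ) S = ∑ S ∈ powersetCard k univ, maxOver y S := by
  conv_rhs => rw [← map_univ_equiv σ, powersetCard_map, sum_map]
  simp [maxOver_map]

end maxOver

theorem max'_insert_of_subset_Iio {α : Type*} [LinearOrder α] [LocallyFiniteOrderBot α] {p : α}
    {T : Finset α} (hT : T ⊆ Iio p) : (insert p T).max' (insert_nonempty p T) = p :=
  le_antisymm
    (max'_le _ _ _ fun _ hq => (mem_insert.1 hq).elim le_of_eq fun h => (mem_Iio.1 (hT h)).le)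
    (le_max' _ p (mem_insert_self p T))

section PowersetCardByMax

variable {α M : Type*} [Fintype α] [LinearOrder α] [LocallyFiniteOrderBot α] [AddCommMonoid M]

theorem sum_powersetCard_succ_eq_sum_sigma_Iio (k : ℕ) (F : Finset α → M) :
    ∑ S ∈ powersetCard (k + 1) univ, F S
      = ∑ x ∈ univ.sigma fun p => powersetCard k (Iio p), F (insert x.1 x.2) := by
  have hne : ∀ S ∈ powersetCard (k + 1) (univ : Finset α), S.Nonempty := fun S hS =>
    card_pos.1 (by rw [(mem_powersetCard.1 hS).2]; omega)
  refine sum_bij' (fun S hS => ⟨S.max' (hne S hS), S.erase (S.max' (hne S hS))⟩)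
    (fun x _ => insert x.1 x.2) ?_ ?_ ?_ ?_ ?_
  · intro S hS
    simp only [mem_sigma, mem_univ, true_and, mem_powersetCard]
    refine ⟨fun q hq => ?_, ?_⟩
    · obtain ⟨hqp, hqS⟩ := mem_erase.1 hq
      exact mem_Iio.2 (lt_of_le_of_ne (S.le_max' q hqS) hqp)
    · rw [card_erase_of_mem (S.max'_mem _), (mem_powersetCard.1 hS).2, Nat.add_sub_cancel]
  · rintro ⟨p, T⟩ hT
    obtain ⟨hTp, hTk⟩ := mem_powersetCard.1 (mem_sigma.1 hT).2
    rw [mem_powersetCard, card_insert_of_notMem fun h => lt_irrefl p (mem_Iio.1 (hTp h)), hTk]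
    exact ⟨subset_univ _, rfl⟩
  · intro S hS
    exact insert_erase (S.max'_mem (hne S hS))
  · rintro ⟨p, T⟩ hT
    have hTp := (mem_powersetCard.1 (mem_sigma.1 hT).2).1
    simp only [max'_insert_of_subset_Iio hTp]
    rw [erase_insert fun h => lt_irrefl p (mem_Iio.1 (hTp h))]
  · intro S hS
    rw [insert_erase (S.max'_mem _)]

theorem sum_powersetCard_succ_eq_sum_choose_card_Iio (k : ℕ) (F : Finset α → M) (g : α → M)
    (hF : ∀ p, ∀ T ⊆ Iio p, F (insert p T) = g p) :
    ∑ S ∈ powersetCard (k + 1) univ, F S = ∑ p, (#(Iio p)).choose k • g p := by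
  rw [sum_powersetCard_succ_eq_sum_sigma_Iio, sum_sigma]
  refine sum_congr rfl fun p _ => ?_
  rw [sum_congr rfl fun T hT => hF p T (mem_powersetCard.1 hT).1, sum_const, card_powersetCard]

end PowersetCardByMax

section OrderStatistics

variable {n : ℕ}

theorem List.mergeSort_ofFn {α : Type*} [LinearOrder α] (f : Fin n → α) :
    (List.ofFn f).mergeSort (· ≤ ·) = List.ofFn (f ∘ Tuple.sort f) :=
  List.Perm.eq_of_pairwise' (List.pairwise_mergeSort' _ _)
    (Tuple.monotone_sort f).sortedLE_ofFn.pairwise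
    ((List.mergeSort_perm _ _).trans ((Tuple.sort f).ofFn_comp_perm f).symm)

theorem List.getD_mergeSort_ofFn {α : Type*} [LinearOrder α] (f : Fin n → α) (p : Fin n) (d : α) :
    ((List.ofFn f).mergeSort (· ≤ ·)).getD p d = f (Tuple.sort f p) := by
  simp [List.mergeSort_ofFn]

theorem sum_powersetCard_maxOver_eq_sum_choose_mul_sort (y : Fin n → ℝ) (k : ℕ) :
    ∑ S ∈ powersetCard (k + 1) univ, maxOver y S
      = ∑ p : Fin n, ((p : ℕ).choose k : ℝ) * y (Tuple.sort y p) := by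
  rw [← sum_powersetCard_maxOver_comp_perm (k + 1) (Tuple.sort y),
    sum_powersetCard_succ_eq_sum_choose_card_Iio k _ (y ∘ Tuple.sort y)]
  · simp [Fin.card_Iio, nsmul_eq_mul]
  · intro p T hT
    refine (Tuple.monotone_sort y).maxOver_eq ⟨mem_insert_self p T, fun q hq => ?_⟩
    rcases mem_insert.1 hq with rfl | hq
    · exact le_rfl
    · exact (mem_Iio.1 (hT hq)).le

theorem apply_sort_eq_inf'_maxOver (y : Fin n → ℝ) (p : Fin n) :
    y (Tuple.sort y p) = (powersetCard (p + 1) univ).inf'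
      (powersetCard_nonempty.2 (by simp)) (maxOver y) := by
  set σ := Tuple.sort y
  refine le_antisymm (le_inf' _ _ fun S hS => ?_) ?_
  · obtain ⟨t, ht, hpt⟩ : ∃ t ∈ S, p ≤ σ.symm t := by
      by_contra! h
      have hsub : S.map σ.symm.toEmbedding ⊆ Iio p := fun q hq => by
        obtain ⟨t, ht, rfl⟩ := mem_map.1 hq
        exact mem_Iio.2 (h t ht)
      have := card_le_card hsub
      rw [card_map, (mem_powersetCard.1 hS).2, Fin.card_Iio] at this
      omega
    calc y (σ p) ≤ y (σ (σ.symm t)) := Tuple.monotone_sort y hpt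
      _ = y t := by rw [Equiv.apply_symm_apply]
      _ ≤ maxOver y S := le_maxOver ht
  · have hmem : (Iic p).map σ.toEmbedding ∈ powersetCard (p + 1) univ := by
      simp
    refine inf'_le_of_le _ hmem (le_of_eq ?_)
    rw [maxOver_map, Equiv.coe_toEmbedding,
      (Tuple.monotone_sort y).maxOver_eq (by rw [coe_Iic]; exact isGreatest_Iic)]
    rfl

theorem measurable_apply_sort (p : Fin n) : Measurable fun v : Fin n → ℝ => v (Tuple.sort v p) := by
  simp_rw [apply_sort_eq_inf'_maxOver _ p]
  exact (Continuous.finset_inf'_apply _ fun S _ => continuous_maxOver S).measurable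

end OrderStatistics

theorem Finset.exists_perm_map_eq {α : Type*} [DecidableEq α] {S T : Finset α} (h : #S = #T) :
    ∃ τ : Equiv.Perm α, S.map τ.toEmbedding = T := by
  obtain ⟨τ, hτ⟩ := Set.powersetCard.isPretransitive.exists_smul_eq
    (⟨S, rfl⟩ : Set.powersetCard α #S) ⟨T, h.symm⟩
  refine ⟨τ, ?_⟩
  have := congrArg Subtype.val hτ
  simpa [Finset.smul_finset_def, Equiv.Perm.smul_def, map_eq_image] using this

section Exchangeable

variable {Ω ι : Type*} [MeasurableSpace Ω] {P : Measure Ω} [Fintype ι] {Y : Ω → ι → ℝ}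

theorem integrable_comp_of_forall_exists_eq_apply (hY : ∀ t, Integrable (fun ω => Y ω t) P)
    {g : (ι → ℝ) → ℝ} (hg : Measurable g) (hgY : ∀ v, ∃ t, g v = v t) :
    Integrable (fun ω => g (Y ω)) P := by
  have hYm : AEMeasurable Y P := aemeasurable_pi_lambda _ fun t => (hY t).aemeasurable
  refine (integrable_finsetSum univ fun t _ => (hY t).abs).mono'
    (hg.comp_aemeasurable hYm).aestronglyMeasurable (ae_of_all _ fun ω => ?_)
  obtain ⟨t, ht⟩ := hgY (Y ω)
  rw [ht, Real.norm_eq_abs]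
  exact single_le_sum (f := fun t => |Y ω t|) (fun _ _ => abs_nonneg _) (mem_univ t)

theorem integrable_maxOver (hY : ∀ t, Integrable (fun ω => Y ω t) P) {S : Finset ι}
    (hS : S.Nonempty) : Integrable (fun ω => maxOver (Y ω) S) P :=
  integrable_comp_of_forall_exists_eq_apply hY (continuous_maxOver S).measurable
    fun v => (exists_maxOver_eq hS v).imp fun _ => And.right

theorem integral_maxOver_eq_of_card_eq [DecidableEq ι]
    (hexch : ∀ τ : Equiv.Perm ι, IdentDistrib (fun ω => Y ω ∘ τ) Y P P) {S T : Finset ι}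
    (h : #S = #T) : ∫ ω, maxOver (Y ω) S ∂P = ∫ ω, maxOver (Y ω) T ∂P := by
  obtain ⟨τ, rfl⟩ := exists_perm_map_eq h
  simp_rw [maxOver_map, Equiv.coe_toEmbedding]
  exact ((hexch τ).comp (continuous_maxOver S).measurable).integral_eq.symm

theorem choose_mul_integral_maxOver_eq_sum {n k : ℕ} {Y : Ω → Fin n → ℝ}
    (hexch : ∀ τ : Equiv.Perm (Fin n), IdentDistrib (fun ω => Y ω ∘ τ) Y P P)
    (hY : ∀ t, Integrable (fun ω => Y ω t) P) {S : Finset (Fin n)} (hS : #S = k + 1) :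
    (n.choose (k + 1) : ℝ) * ∫ ω, maxOver (Y ω) S ∂P
      = ∑ p : Fin n, ((p : ℕ).choose k : ℝ) * ∫ ω, Y ω (Tuple.sort (Y ω) p) ∂P := by
  have hsort : ∀ p, Integrable (fun ω => Y ω (Tuple.sort (Y ω) p)) P := fun p =>
    integrable_comp_of_forall_exists_eq_apply hY (measurable_apply_sort p) fun v => ⟨_, rfl⟩
  calc (n.choose (k + 1) : ℝ) * ∫ ω, maxOver (Y ω) S ∂P
      = ∑ T ∈ powersetCard (k + 1) univ, ∫ ω, maxOver (Y ω) T ∂P := by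
        rw [sum_congr rfl fun T hT => integral_maxOver_eq_of_card_eq hexch
          ((mem_powersetCard.1 hT).2.trans hS.symm), sum_const, card_powersetCard, card_univ,
          Fintype.card_fin, nsmul_eq_mul]
    _ = ∫ ω, ∑ T ∈ powersetCard (k + 1) univ, maxOver (Y ω) T ∂P :=
        (integral_finsetSum _ fun T hT => integrable_maxOver hY
          (card_pos.1 (by rw [(mem_powersetCard.1 hT).2]; omega))).symm
    _ = ∑ p : Fin n, ((p : ℕ).choose k : ℝ) * ∫ ω, Y ω (Tuple.sort (Y ω) p) ∂P := by
        simp_rw [sum_powersetCard_maxOver_eq_sum_choose_mul_sort]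
        rw [integral_finsetSum _ fun p _ => (hsort p).const_mul _]
        simp_rw [integral_const_mul]

end Exchangeable

def finEquivIcc (m : ℕ) : Fin m ≃ {j : ℕ // 1 ≤ j ∧ j ≤ m} where
  toFun t := ⟨t + 1, by omega, t.isLt⟩
  invFun j := ⟨j - 1, by omega⟩
  left_inv t := by ext; simp
  right_inv j := by ext; simp; omega

theorem identDistrib_comp_perm_of_exchangeable {Ω : Type*} [MeasurableSpace Ω] {P : Measure Ω}
    {m : ℕ} {X : ℕ → Ω → ℝ} (hmeas : ∀ i, Measurable (X i))
    (hexch : ∀ σ : Equiv.Perm ℕ, (∀ i, ¬(1 ≤ i ∧ i ≤ m) → σ i = i) →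
        Measure.map (fun ω => fun i => X (σ i) ω) P = Measure.map (fun ω => fun i => X i ω) P)
    (τ : Equiv.Perm (Fin m)) :
    IdentDistrib (fun ω => (fun t : Fin m => X (t + 1) ω) ∘ τ) (fun ω t => X (t + 1) ω) P P := by
  set σ := Equiv.Perm.ofSubtype ((finEquivIcc m).permCongr τ)
  have hσ : ∀ t : Fin m, σ (t + 1) = τ t + 1 := fun t => by
    rw [Equiv.Perm.ofSubtype_apply_of_mem _ ⟨by omega, t.isLt⟩, Equiv.permCongr_apply]
    exact congrArg (fun j => (finEquivIcc m (τ j) : ℕ)) ((finEquivIcc m).symm_apply_apply t)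
  have hd : IdentDistrib (fun ω i => X (σ i) ω) (fun ω i => X i ω) P P :=
    ⟨(measurable_pi_lambda _ fun i => hmeas (σ i)).aemeasurable,
      (measurable_pi_lambda _ hmeas).aemeasurable,
      hexch σ fun i hi => Equiv.Perm.ofSubtype_apply_of_not_mem _ hi⟩
  convert hd.comp (measurable_pi_lambda (fun (v : ℕ → ℝ) (t : Fin m) => v (t + 1))
    fun t => measurable_pi_apply _) using 1
  · funext ω t
    simp [hσ]
  · rfl

theorem sum_fin_choose_mul_eq_sum_Icc (f : ℕ → ℝ) (k m : ℕ) :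
    ∑ p : Fin m, ((p : ℕ).choose k : ℝ) * f (p + 1)
      = ∑ l ∈ Icc (k + 1) m, f l * ((l - 1).choose k : ℝ) := by
  rw [Fin.sum_univ_eq_sum_range (fun p => (p.choose k : ℝ) * f (p + 1)),
    ← Ico_add_one_right_eq_Icc, ← sum_Ico_add' (fun l => f l * ((l - 1).choose k : ℝ))]
  simp only [Nat.add_sub_cancel, mul_comm]
  refine (sum_subset (fun p hp => mem_range.2 (mem_Ico.1 hp).2) fun p hpm hp => ?_).symm
  have hpk : p < k := by
    rw [mem_range] at hpm
    rw [mem_Ico] at hp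
    omega
  simp [Nat.choose_eq_zero_of_lt hpk]

theorem expected_max_via_order_statistics_general
    {Ω : Type*} [MeasurableSpace Ω] (P : Measure Ω)
    (m : ℕ) (X : ℕ → Ω → ℝ)
    (hmeas : ∀ i, Measurable (X i))
    (hint : ∀ i, 1 ≤ i → i ≤ m → Integrable (X i) P)
    (hexch : ∀ σ : Equiv.Perm ℕ, (∀ i, ¬(1 ≤ i ∧ i ≤ m) → σ i = i) →
        Measure.map (fun ω => fun i => X (σ i) ω) P = Measure.map (fun ω => fun i => X i ω) P)
    (μ : ℕ → ℝ)
    (hμ : ∀ k, μ k = ∫ ω, (partialSups (fun i => X (i + 1) ω)) (k - 1) ∂P)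
    (μord : ℕ → ℝ)
    (hμord : ∀ l, μord l =
        ∫ ω, ((List.ofFn fun i : Fin m => X (i + 1) ω).mergeSort (· ≤ ·)).getD (l - 1) 0 ∂P) :
    ∀ i : ℕ, 1 ≤ i → i ≤ m →
      μ i = ((m.choose i : ℝ))⁻¹ *
        ∑ l ∈ Finset.Icc i m, μord l * ((l - 1).choose (i - 1)) := by
  intro i hi him
  obtain ⟨k, rfl⟩ : ∃ k, i = k + 1 := ⟨i - 1, by omega⟩
  set first : Finset (Fin m) := Iic ⟨k, by omega⟩
  have hμfirst : μ (k + 1) = ∫ ω, maxOver (fun t : Fin m => X (t + 1) ω) first ∂P := by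
    have hfirst : first.map Fin.valEmbedding = Iic k := Fin.map_valEmbedding_Iic _
    simp_rw [hμ, partialSups_apply, Nat.add_sub_cancel, ← maxOver_of_nonempty, ← hfirst,
      maxOver_map]
    rfl
  have hμsort : ∀ p : Fin m,
      μord (p + 1) = ∫ ω, X (Tuple.sort (fun t : Fin m => X (t + 1) ω) p + 1) ω ∂P := fun p => by
    simp_rw [hμord, Nat.add_sub_cancel]
    exact integral_congr_ae (ae_of_all _ fun ω => List.getD_mergeSort_ofFn _ p 0)
  have key := choose_mul_integral_maxOver_eq_sum
    (identDistrib_comp_perm_of_exchangeable hmeas hexch)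
    (fun t => hint (t + 1) (by omega) (by omega)) (show #first = k + 1 from Fin.card_Iic _)
  rw [hμfirst, eq_inv_mul_iff_mul_eq₀ (Nat.cast_ne_zero.2 (Nat.choose_pos him).ne'), key,
    Nat.add_sub_cancel, ← sum_fin_choose_mul_eq_sum_Icc]
  simp_rw [hμsort]

theorem expected_max_via_order_statistics
    {Ω : Type*} [MeasurableSpace Ω] (P : Measure Ω) [IsProbabilityMeasure P]
    (m : ℕ) (X : ℕ → Ω → ℝ)
    (hmeas : ∀ i, Measurable (X i))
    (hint : ∀ i, 1 ≤ i → i ≤ m → Integrable (X i) P)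
    (hexch : ∀ σ : Equiv.Perm ℕ, (∀ i, ¬(1 ≤ i ∧ i ≤ m) → σ i = i) →
        Measure.map (fun ω => fun i => X (σ i) ω) P = Measure.map (fun ω => fun i => X i ω) P)
    (hdistinct : ∀ i j, 1 ≤ i → i ≤ m → 1 ≤ j → j ≤ m → i ≠ j →
        ∀ᵐ ω ∂P, X i ω ≠ X j ω)
    (μ : ℕ → ℝ)
    (hμ : ∀ k, μ k = ∫ ω, (partialSups (fun i => X (i + 1) ω)) (k - 1) ∂P)
    (μord : ℕ → ℝ)
    (hμord : ∀ l, μord l =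
        ∫ ω, ((List.ofFn fun i : Fin m => X (i + 1) ω).mergeSort (· ≤ ·)).getD (l - 1) 0 ∂P) :
    ∀ i : ℕ, 1 ≤ i → i ≤ m →
      μ i = ((m.choose i : ℝ))⁻¹ *
        ∑ l ∈ Finset.Icc i m, μord l * ((l - 1).choose (i - 1)) :=
  expected_max_via_order_statistics_general P m X hmeas hint hexch μ hμ μord hμord
end

section
/- Let μ : ℕ → ℝ be strictly increasing with nonincreasing increments, and ΔV_n(c) := ∑_{k=c+1}^{n-1} μ_k/(k(k-1)) - μ_c/c + μ_1/(n-1). For each fixed c, ΔV_n(c) ≥ (μ_{c+1} - μ_c)/(c+1) - (μ_{c+1} - μ_1)/(n-1); consequently ΔV_n(c) > 0 for all sufficiently large n, and therefore c_*(n) := min{c : ΔV_n(c) ≤ 0} tends to infinity as n → ∞. -/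
/-!
Since `μ` is nondecreasing from `1` on, every `μ k` in the sum defining `ΔV n c` is at least
`μ (c + 1)`, and `∑_{k=c+1}^{n-1} 1/(k(k-1))` telescopes to `1/c - 1/(n-1)`; this gives the lower
bound, whose error term `(μ (c + 1) - μ 1)/(n - 1)` vanishes as `n → ∞` while the main term
`(μ (c + 1) - μ c)/(c + 1)` is positive. So each fixed `c` eventually leaves the set
`{c ≥ 1 | ΔV n c ≤ 0}`, which for `n ≥ 2` is nonempty because `ΔV n (n - 1) = (μ 1 - μ (n - 1))/(n - 1) ≤ 0`;
hence its least element tends to infinity.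
-/

open Filter Finset

noncomputable section

def thresholdGap (μ : ℕ → ℝ) (n c : ℕ) : ℝ :=
  (∑ k ∈ Icc (c + 1) (n - 1), μ k / ((k : ℝ) * ((k : ℝ) - 1))) - μ c / c + μ 1 / ((n : ℝ) - 1)

theorem sum_Icc_one_div_mul_sub_one {c m : ℕ} (hc : 1 ≤ c) (hcm : c ≤ m) :
    ∑ k ∈ Icc (c + 1) m, 1 / ((k : ℝ) * ((k : ℝ) - 1)) = 1 / c - 1 / m := by
  induction m, hcm using Nat.le_induction with
  | base => simp
  | succ m hcm ih =>
    have hm : (m : ℝ) ≠ 0 := by positivity [(by omega : m ≠ 0)]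
    rw [sum_Icc_succ_top (by omega), ih]
    push_cast
    rw [add_sub_cancel_right]
    field_simp
    ring

theorem thresholdGap_ge {μ : ℕ → ℝ} (hμ : MonotoneOn μ (Set.Ici 1)) {c n : ℕ} (hc : 1 ≤ c)
    (hn : c + 1 ≤ n) :
    (μ (c + 1) - μ c) / ((c : ℝ) + 1) - (μ (c + 1) - μ 1) / ((n : ℝ) - 1) ≤ thresholdGap μ n c := by
  have hc₀ : (0 : ℝ) < c := by exact_mod_cast hc
  have hn₁ : ((n - 1 : ℕ) : ℝ) = (n : ℝ) - 1 := by push_cast [hc.trans (by omega : c ≤ n)]; ring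
  have hn₀ : (0 : ℝ) < (n : ℝ) - 1 := by rw [← hn₁]; exact_mod_cast (by omega : 0 < n - 1)
  have hsum : μ (c + 1) * (1 / (c : ℝ) - 1 / ((n : ℝ) - 1)) ≤
      ∑ k ∈ Icc (c + 1) (n - 1), μ k / ((k : ℝ) * ((k : ℝ) - 1)) := by
    rw [← hn₁, ← sum_Icc_one_div_mul_sub_one hc (by omega), mul_sum]
    refine sum_le_sum fun k hk => ?_
    obtain ⟨hck, -⟩ := mem_Icc.1 hk
    have hk₁ : (1 : ℝ) < k := by exact_mod_cast (by omega : 1 < k)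
    rw [mul_one_div]
    gcongr
    exact hμ (by simp) (by simp; omega) hck
  have hstep : μ c ≤ μ (c + 1) := hμ (by simpa using hc) (by simp) (by omega)
  have hdenom : (μ (c + 1) - μ c) / ((c : ℝ) + 1) ≤ (μ (c + 1) - μ c) / c := by
    gcongr
    linarith
  have hrewrite : μ (c + 1) * (1 / (c : ℝ) - 1 / ((n : ℝ) - 1)) - μ c / c + μ 1 / ((n : ℝ) - 1)
      = (μ (c + 1) - μ c) / c - (μ (c + 1) - μ 1) / ((n : ℝ) - 1) := by
    field_simp
    ring
  unfold thresholdGap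
  linarith

theorem eventually_thresholdGap_pos {μ : ℕ → ℝ} (hμ : MonotoneOn μ (Set.Ici 1)) {c : ℕ}
    (hc : 1 ≤ c) (hjump : μ c < μ (c + 1)) : ∀ᶠ n in atTop, 0 < thresholdGap μ n c := by
  have hden : Tendsto (fun n : ℕ => (n : ℝ) - 1) atTop atTop :=
    tendsto_atTop_add_const_right _ (-1) tendsto_natCast_atTop_atTop
  have hbound : Tendsto
      (fun n : ℕ => (μ (c + 1) - μ c) / ((c : ℝ) + 1) - (μ (c + 1) - μ 1) / ((n : ℝ) - 1))
      atTop (nhds ((μ (c + 1) - μ c) / ((c : ℝ) + 1) - 0)) :=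
    tendsto_const_nhds.sub (tendsto_const_nhds.div_atTop hden)
  have hmain : 0 < (μ (c + 1) - μ c) / ((c : ℝ) + 1) - 0 := by
    rw [sub_zero]; exact div_pos (sub_pos.2 hjump) (by positivity)
  filter_upwards [hbound.eventually (lt_mem_nhds hmain), eventually_ge_atTop (c + 1)] with n hpos hn
  exact hpos.trans_le (thresholdGap_ge hμ hc hn)

theorem thresholdGap_pred_nonpos {μ : ℕ → ℝ} (hμ : MonotoneOn μ (Set.Ici 1)) {n : ℕ}
    (hn : 2 ≤ n) : thresholdGap μ n (n - 1) ≤ 0 := by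
  have hn₁ : ((n - 1 : ℕ) : ℝ) = (n : ℝ) - 1 := by push_cast [(by omega : 1 ≤ n)]; ring
  have hn₀ : (0 : ℝ) < (n : ℝ) - 1 := by rw [← hn₁]; exact_mod_cast (by omega : 0 < n - 1)
  have hμn : μ 1 ≤ μ (n - 1) := hμ (by simp) (by simp; omega) (by omega)
  rw [thresholdGap, Icc_eq_empty (by omega), sum_empty, hn₁, zero_sub, neg_add_eq_sub, ← sub_div]
  exact div_nonpos_of_nonpos_of_nonneg (by linarith) hn₀.le

theorem tendsto_sInf_setOf_atTop {p : ℕ → ℕ → Prop} (hfails : ∀ c, ∀ᶠ n in atTop, ¬p n c)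
    (hexists : ∀ᶠ n in atTop, ∃ c, p n c) :
    Tendsto (fun n => sInf {c | p n c}) atTop atTop := by
  refine tendsto_atTop.2 fun M => ?_
  have hbelow : ∀ᶠ n in atTop, ∀ c ∈ range M, ¬p n c := (eventually_all_finset _).2 fun c _ => hfails c
  filter_upwards [hbelow, hexists] with n hn ⟨c, hc⟩
  refine le_csInf ⟨c, hc⟩ fun b hb => ?_
  by_contra! hbM
  exact hn b (mem_range.2 hbM) hb

end

open Filter in
theorem threshold_diverges_general (μ : ℕ → ℝ)
    (hstrict : ∀ k, 1 ≤ k → μ k < μ (k + 1))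
    (ΔV : ℕ → ℕ → ℝ)
    (hΔV : ∀ n c, ΔV n c = (∑ k ∈ Finset.Icc (c + 1) (n - 1), μ k / ((k : ℝ) * ((k : ℝ) - 1)))
        - μ c / c + μ 1 / ((n : ℝ) - 1))
    (cstar : ℕ → ℕ)
    (hcstar : ∀ n, cstar n = sInf {c : ℕ | 1 ≤ c ∧ ΔV n c ≤ 0}) :
    (∀ c n : ℕ, 1 ≤ c → c + 2 ≤ n →
        ΔV n c ≥ (μ (c + 1) - μ c) / ((c : ℝ) + 1) - (μ (c + 1) - μ 1) / ((n : ℝ) - 1)) ∧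
    (∀ c : ℕ, 1 ≤ c → ∃ N : ℕ, ∀ n ≥ N, 0 < ΔV n c) ∧
    Tendsto cstar atTop atTop := by
  obtain rfl : ΔV = thresholdGap μ := funext₂ hΔV
  obtain rfl : cstar = fun n => sInf {c | 1 ≤ c ∧ thresholdGap μ n c ≤ 0} := funext hcstar
  have hμ : MonotoneOn μ (Set.Ici 1) := monotoneOn_nat_Ici_of_le_succ fun k hk => (hstrict k hk).le
  have hpos : ∀ c, 1 ≤ c → ∀ᶠ n in atTop, 0 < thresholdGap μ n c := fun c hc =>
    eventually_thresholdGap_pos hμ hc (hstrict c hc)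
  refine ⟨fun c n hc hn => thresholdGap_ge hμ hc (by omega), fun c hc => eventually_atTop.1 (hpos c hc),
    tendsto_sInf_setOf_atTop (fun c => ?_) ?_⟩
  · rcases Nat.eq_zero_or_pos c with rfl | hc
    · exact Eventually.of_forall fun n h => absurd h.1 (by omega)
    · exact (hpos c hc).mono fun n hn h => h.2.not_gt hn
  · filter_upwards [eventually_ge_atTop 2] with n hn
    exact ⟨n - 1, by omega, thresholdGap_pred_nonpos hμ hn⟩

open Filter in
theorem threshold_diverges (μ : ℕ → ℝ)
    (hstrict : ∀ k, 1 ≤ k → μ k < μ (k + 1))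
    (hconc : ∀ k, 1 ≤ k → μ (k + 2) - μ (k + 1) ≤ μ (k + 1) - μ k)
    (ΔV : ℕ → ℕ → ℝ)
    (hΔV : ∀ n c, ΔV n c = (∑ k ∈ Finset.Icc (c + 1) (n - 1), μ k / ((k : ℝ) * ((k : ℝ) - 1)))
        - μ c / c + μ 1 / ((n : ℝ) - 1))
    (cstar : ℕ → ℕ)
    (hcstar : ∀ n, cstar n = sInf {c : ℕ | 1 ≤ c ∧ ΔV n c ≤ 0}) :
    (∀ c n : ℕ, 1 ≤ c → c + 2 ≤ n →
        ΔV n c ≥ (μ (c + 1) - μ c) / ((c : ℝ) + 1) - (μ (c + 1) - μ 1) / ((n : ℝ) - 1)) ∧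
    (∀ c : ℕ, 1 ≤ c → ∃ N : ℕ, ∀ n ≥ N, 0 < ΔV n c) ∧
    Tendsto cstar atTop atTop :=
  threshold_diverges_general μ hstrict ΔV hΔV cstar hcstar
end

section
/- For the exponential case, the optimal threshold index c_*(n) := min{c ≥ 1 : 1/c - 1/n + 1/(n-1) - H_{n-1}/(n-1) ≤ 0} satisfies ⌊(n-1)/H_{n-1}⌋ < c_*(n) + 1 and c_*(n) < ⌈n/H_n⌉ + 1, where H_m = ∑_{i=1}^m 1/i; in particular c_*(n)·H_n / n → 1 as n → ∞, i.e., c_*(n) ~ n/log n. -/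
/-!
If `c` satisfies the threshold inequality then, since `1/n ≤ 1/(n-1)`, `1/c ≤ H_{n-1}/(n-1)`,
i.e. `c ≥ (n-1)/H_{n-1}`. Conversely any `c` with `1/c ≤ H_n/n` makes the left-hand side at most
`(2 - 1/n - H_{n-1}) / (n(n-1))` (using `H_n = H_{n-1} + 1/n`), which is nonpositive because
`H_{n-1} ≥ 2 - 1/n` for `n ≥ 4`; so `⌈n/H_n⌉` is feasible (for `n = 3` by direct computation).
Hence `c_*(n) = n/H_n + O(1)`, and `c_*(n) H_n / n → 1` since `H_n/n → 0` as a Cesàro mean of `1/i`.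
-/

open Filter Topology

lemma harmonic_mono : Monotone harmonic :=
  monotone_nat_of_le_succ fun n => by
    rw [harmonic_succ]
    exact le_add_of_nonneg_right (by positivity)

lemma two_sub_inv_le_harmonic {m : ℕ} (hm : 3 ≤ m) : 2 - ((m : ℚ) + 1)⁻¹ ≤ harmonic m := by
  induction m, hm using Nat.le_induction with
  | base => norm_num [harmonic]
  | succ k _ ih =>
    rw [harmonic_succ]
    push_cast
    have : (0 : ℚ) < ((k : ℚ) + 1 + 1)⁻¹ := by positivity
    linarith

lemma tendsto_harmonic_div_atTop :
    Tendsto (fun n : ℕ => (harmonic n : ℝ) / n) atTop (𝓝 0) := by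
  have h : Tendsto (fun i : ℕ => ((i : ℝ) + 1)⁻¹) atTop (𝓝 0) :=
    tendsto_inv_atTop_zero.comp (tendsto_natCast_atTop_atTop.atTop_add tendsto_const_nhds)
  refine h.cesaro.congr fun n => ?_
  simp [harmonic, div_eq_inv_mul]

def thresholdSet (n : ℕ) : Set ℕ :=
  {c | 1 ≤ c ∧
    1 / (c : ℝ) - 1 / n + 1 / ((n : ℝ) - 1) - harmonic (n - 1) / ((n : ℝ) - 1) ≤ 0}

lemma div_harmonic_le_of_mem_thresholdSet {n c : ℕ} (hn : 2 ≤ n) (hc : c ∈ thresholdSet n) :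
    ((n : ℝ) - 1) / harmonic (n - 1) ≤ c := by
  obtain ⟨hc1, hc⟩ := hc
  have hn1 : (0 : ℝ) < n - 1 := by
    have : (2 : ℝ) ≤ n := by exact_mod_cast hn
    linarith
  have hH : (0 : ℝ) < harmonic (n - 1) := by exact_mod_cast harmonic_pos (by omega)
  have hc0 : (0 : ℝ) < c := by exact_mod_cast hc1
  have hinv : 1 / (n : ℝ) ≤ 1 / ((n : ℝ) - 1) := one_div_le_one_div_of_le hn1 (by linarith)
  have hrecip : 1 / (c : ℝ) ≤ harmonic (n - 1) / ((n : ℝ) - 1) := by linarith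
  rw [div_le_div_iff₀ hc0 hn1, one_mul] at hrecip
  rw [div_le_iff₀ hH]
  linarith

lemma harmonic_div_sub_harmonic_pred_div_nonpos {n : ℕ} (hn : 4 ≤ n) :
    (harmonic n : ℝ) / n - 1 / n + 1 / ((n : ℝ) - 1) - harmonic (n - 1) / ((n : ℝ) - 1) ≤ 0 := by
  obtain ⟨m, rfl⟩ : ∃ m, n = m + 1 := ⟨n - 1, by omega⟩
  have hm0 : (0 : ℝ) < m := by norm_cast; omega
  have hH : 2 - ((m : ℝ) + 1)⁻¹ ≤ harmonic m := by
    have := two_sub_inv_le_harmonic (m := m) (by omega)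
    rw [← Rat.cast_le (K := ℝ)] at this
    push_cast at this
    exact this
  have key : (harmonic (m + 1) : ℝ) / ((m + 1 : ℕ) : ℝ) - 1 / ((m + 1 : ℕ) : ℝ) +
      1 / (((m + 1 : ℕ) : ℝ) - 1) - harmonic (m + 1 - 1) / (((m + 1 : ℕ) : ℝ) - 1) =
      ((2 - ((m : ℝ) + 1)⁻¹) - harmonic m) / (m * (m + 1)) := by
    rw [harmonic_succ, Nat.add_sub_cancel]
    push_cast
    rw [add_sub_cancel_right]
    field_simp
    ring
  rw [key]
  exact div_nonpos_of_nonpos_of_nonneg (by linarith) (by positivity)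

lemma ceil_div_harmonic_mem_thresholdSet {n : ℕ} (hn : 3 ≤ n) :
    ⌈(n : ℝ) / (harmonic n : ℝ)⌉₊ ∈ thresholdSet n := by
  have hH : (0 : ℝ) < harmonic n := by exact_mod_cast harmonic_pos (by omega)
  have hn0 : (0 : ℝ) < n := by norm_cast; omega
  have hc0 : (0 : ℝ) < ⌈(n : ℝ) / (harmonic n : ℝ)⌉₊ :=
    Nat.cast_pos.2 (Nat.ceil_pos.2 (by positivity))
  refine ⟨by exact_mod_cast hc0, ?_⟩
  obtain rfl | hn4 := hn.eq_or_lt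
  · -- `H_2 = 3/2 < 2 - 1/3`: the general estimate fails, so compute directly.
    have : ⌈((3 : ℕ) : ℝ) / (harmonic 3 : ℝ)⌉₊ = 2 := by
      rw [Nat.ceil_eq_iff (by norm_num)]; norm_num [harmonic]
    rw [this]
    norm_num [harmonic]
  have hceil : 1 / (⌈(n : ℝ) / (harmonic n : ℝ)⌉₊ : ℝ) ≤ harmonic n / n := by
    rw [one_div_le hc0 (by positivity), one_div_div]
    exact Nat.le_ceil _
  linarith [harmonic_div_sub_harmonic_pred_div_nonpos hn4]

lemma div_harmonic_le_sInf_thresholdSet {n : ℕ} (hn : 3 ≤ n) :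
    ((n : ℝ) - 1) / harmonic (n - 1) ≤ sInf (thresholdSet n) :=
  div_harmonic_le_of_mem_thresholdSet (by omega)
    (Nat.sInf_mem ⟨_, ceil_div_harmonic_mem_thresholdSet hn⟩)

lemma sInf_thresholdSet_le_ceil {n : ℕ} (hn : 3 ≤ n) :
    sInf (thresholdSet n) ≤ ⌈(n : ℝ) / harmonic n⌉₊ :=
  Nat.sInf_le (ceil_div_harmonic_mem_thresholdSet hn)

lemma tendsto_mul_harmonic_div_of_le_of_le {c : ℕ → ℝ}
    (hlow : ∀ᶠ n : ℕ in atTop, ((n : ℝ) - 1) / harmonic (n - 1) ≤ c n)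
    (hup : ∀ᶠ n : ℕ in atTop, c n ≤ n / harmonic n + 1) :
    Tendsto (fun n => c n * harmonic n / n) atTop (𝓝 1) := by
  have hlim₁ : Tendsto (fun n : ℕ => 1 - 1 / (n : ℝ)) atTop (𝓝 1) := by
    simpa using (tendsto_one_div_atTop_nhds_zero_nat (𝕜 := ℝ)).const_sub 1
  have hlim₂ : Tendsto (fun n : ℕ => 1 + (harmonic n : ℝ) / n) atTop (𝓝 1) := by
    simpa using tendsto_const_nhds.add tendsto_harmonic_div_atTop
  refine tendsto_of_tendsto_of_tendsto_of_le_of_le' hlim₁ hlim₂ ?_ ?_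
  · filter_upwards [hlow, eventually_ge_atTop 2] with n hlow hn
    have hn0 : (0 : ℝ) < n := by positivity
    have hn1 : (1 : ℝ) ≤ n := by exact_mod_cast (by omega : 1 ≤ n)
    have hH : (0 : ℝ) < harmonic (n - 1) := by exact_mod_cast harmonic_pos (by omega)
    have hc : 0 ≤ c n := (div_nonneg (sub_nonneg.2 hn1) hH.le).trans hlow
    have hmul : (n : ℝ) - 1 ≤ c n * harmonic n :=
      calc (n : ℝ) - 1 ≤ c n * harmonic (n - 1) := (div_le_iff₀ hH).1 hlow
        _ ≤ c n * harmonic n := by gcongr; exact_mod_cast harmonic_mono (Nat.sub_le n 1)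
    rw [le_div_iff₀ hn0, sub_mul, one_div_mul_cancel hn0.ne', one_mul]
    linarith
  · filter_upwards [hup, eventually_ge_atTop 1] with n hup hn
    have hn0 : (0 : ℝ) < n := by positivity
    have hH : (0 : ℝ) < harmonic n := by exact_mod_cast harmonic_pos (by omega)
    rw [div_le_iff₀ hn0, add_mul, one_mul, div_mul_cancel₀ _ hn0.ne']
    calc c n * harmonic n ≤ (n / harmonic n + 1) * harmonic n := by gcongr
      _ = n + harmonic n := by field_simp

open Filter in
theorem exponential_threshold_asymptotics (H : ℕ → ℝ)
    (hH : ∀ m, H m = ∑ i ∈ Finset.Icc 1 m, (1 : ℝ) / i)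
    (cstar : ℕ → ℕ)
    (hcstar : ∀ n, cstar n = sInf {c : ℕ | 1 ≤ c ∧
        1 / (c : ℝ) - 1 / n + 1 / ((n : ℝ) - 1) - H (n - 1) / ((n : ℝ) - 1) ≤ 0}) :
    (∀ n : ℕ, 3 ≤ n →
        Nat.floor (((n : ℝ) - 1) / H (n - 1)) < cstar n + 1 ∧
        cstar n < Nat.ceil ((n : ℝ) / H n) + 1) ∧
    Tendsto (fun n : ℕ => (cstar n : ℝ) * H n / n) atTop (nhds 1) := by
  obtain rfl : H = fun m => (harmonic m : ℝ) :=
    funext fun m => by simp [hH, harmonic_eq_sum_Icc]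
  have hcstar_eq : ∀ n, cstar n = sInf (thresholdSet n) := hcstar
  have hlow : ∀ n : ℕ, 3 ≤ n → ((n : ℝ) - 1) / harmonic (n - 1) ≤ cstar n := fun n hn =>
    hcstar_eq n ▸ div_harmonic_le_sInf_thresholdSet hn
  have hup : ∀ n : ℕ, 3 ≤ n → cstar n ≤ ⌈(n : ℝ) / (harmonic n : ℝ)⌉₊ := fun n hn =>
    hcstar_eq n ▸ sInf_thresholdSet_le_ceil hn
  refine ⟨fun n hn => ⟨Nat.lt_succ_of_le (Nat.floor_le_of_le (hlow n hn)),
    Nat.lt_succ_of_le (hup n hn)⟩, ?_⟩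
  refine tendsto_mul_harmonic_div_of_le_of_le
    ((eventually_ge_atTop 3).mono hlow) ((eventually_ge_atTop 3).mono fun n hn => ?_)
  have hH : (0 : ℝ) ≤ harmonic n := Rat.cast_nonneg.2 (harmonic_pos (by omega)).le
  exact (Nat.cast_le.2 (hup n hn)).trans (Nat.ceil_lt_add_one (by positivity)).le
end
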